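/- Safety of the abstract unification algorithm for groundness analysis: let U and V be finite sets of variables, A a term with vars(A) ⊆ U, B a term with vars(B) ⊆ V, θ♭ ⊆ U and σ♭ ⊆ V. Let Ψ be a renaming with dom(Ψ) = U and UΨ ∩ V = ∅ (where UΨ = {XΨ | X ∈ U}), and suppose AΨ and B unify with an idempotent mgu whose associated solved-form set of equations is E₀ = {X = XE₀ | X ∈ dom(E₀)} (no variable of dom(E₀) occurs in any right-hand side of E₀). Let θ and ω be substitutions such that Xθ is ground for every X ∈ θ♭ and Xω is ground for every X ∈ σ♭. Let ρ be a renaming with vars(Aθρ) ∩ vars(Bω) = ∅, and suppose Aθρ and Bω unify with mgu μ. Then for every variable Z ∈ V ∩ upwards(E₀, downwards(E₀, θ♭Ψ ∪ σ♭)) (where θ♭Ψ = {XΨ | X ∈ θ♭}), the term Z(ω∘μ) is ground. -/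

import Mathlib

open scoped Classical

/-- First-order terms over a set `F` of function symbols, with variables drawn from `ℕ`. -/
inductive Tm (F : Type) : Type
  | var : ℕ → Tm F
  | app : F → List (Tm F) → Tm F

namespace Tm

/-- Applying a substitution (a map from variables to terms) to a term. -/
def subst {F : Type} : Tm F → (ℕ → Tm F) → Tm F
  | var x, θ => θ x
  | app f ts, θ => app f (ts.attach.map fun t => t.1.subst θ)
  decreasing_by
    have := List.sizeOf_lt_of_mem t.2
    simp only [Tm.app.sizeOf_spec]
    omega

/-- The set of variables occurring in a term. -/
def vars {F : Type} : Tm F → Set ℕ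
  | var x => {x}
  | app _ ts => ⋃ t : {x // x ∈ ts}, t.1.vars
  decreasing_by
    have := List.sizeOf_lt_of_mem t.2
    simp only [Tm.app.sizeOf_spec]
    omega

/-- A term is ground if it contains no variables. -/
def Ground {F : Type} (t : Tm F) : Prop := t.vars = ∅

end Tm

/-- Substitutions are maps from variables to terms (finite support is
    imposed separately by `Subst.IsSubst`). -/
abbrev Subst (F : Type) := ℕ → Tm F

namespace Subst

variable {F : Type}

/-- The domain of a substitution. -/
def dom (θ : Subst F) : Set ℕ := {x | θ x ≠ Tm.var x}

/-- A genuine substitution is the identity on all but finitely many variables. -/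
def IsSubst (θ : Subst F) : Prop := (dom θ).Finite

/-- The range variables of a substitution. -/
def rang (θ : Subst F) : Set ℕ := ⋃ x ∈ dom θ, (θ x).vars

/-- vars(θ) = dom(θ) ∪ rang(θ). -/
def svars (θ : Subst F) : Set ℕ := dom θ ∪ rang θ

/-- Composition: `X (comp θ σ) = (X θ) σ`. -/
def comp (θ σ : Subst F) : Subst F := fun x => (θ x).subst σ

/-- Restriction of a substitution to a set of variables. -/
noncomputable def restrict (θ : Subst F) (V : Set ℕ) : Subst F :=
  fun x => if x ∈ V then θ x else Tm.var x

/-- A renaming is a substitution mapping its domain injectively to variables. -/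
def IsRenaming (ρ : Subst F) : Prop :=
  IsSubst ρ ∧ (∀ x, ∃ y, ρ x = Tm.var y) ∧ Set.InjOn ρ (dom ρ)

/-- Two substitutions are equivalent modulo renaming. -/
def EquivMod (σ θ : Subst F) : Prop :=
  ∃ δ ρ, IsRenaming δ ∧ IsRenaming ρ ∧ σ = comp θ δ ∧ θ = comp σ ρ

/-- `μ` is a unifier of the terms `s` and `t`. -/
def Unifier (μ : Subst F) (s t : Tm F) : Prop :=
  IsSubst μ ∧ s.subst μ = t.subst μ

/-- Two terms unify if they have a unifier. -/
def Unify (s t : Tm F) : Prop := ∃ μ, Unifier μ s t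

/-- `μ` is a most general unifier of the terms `s` and `t`. -/
def IsMGU (μ : Subst F) (s t : Tm F) : Prop :=
  Unifier μ s t ∧ ∀ τ, Unifier τ s t → ∃ δ, IsSubst δ ∧ τ = comp μ δ

/-- The image of a set of variables under a renaming: `Vρ = {Xρ | X ∈ V}`. -/
def varImage (ρ : Subst F) (V : Set ℕ) : Set ℕ := {y | ∃ x ∈ V, ρ x = Tm.var y}

/-- The substitution `φρ`, whose bindings are `{Xρ ↦ tρ | X ↦ t a binding of φ}`. -/
noncomputable def renameSubst (φ ρ : Subst F) : Subst F := fun y =>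
  if h : ∃ x, x ∈ dom φ ∧ ρ x = Tm.var y then (φ h.choose).subst ρ else Tm.var y

/-- `μ` is a unifier of a set of equations (pairs of terms). -/
def EqUnifier (μ : Subst F) (E : Set (Tm F × Tm F)) : Prop :=
  IsSubst μ ∧ ∀ e ∈ E, e.1.subst μ = e.2.subst μ

/-- `μ` is a most general unifier of a set of equations. -/
def EqIsMGU (μ : Subst F) (E : Set (Tm F × Tm F)) : Prop :=
  EqUnifier μ E ∧ ∀ τ, EqUnifier τ E → ∃ δ, IsSubst δ ∧ τ = comp μ δ

/-- Applying a substitution to a set of equations. -/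
def eqSubst (E : Set (Tm F × Tm F)) (θ : Subst F) : Set (Tm F × Tm F) :=
  (fun e => (e.1.subst θ, e.2.subst θ)) '' E

/-- `downwards(E, S) = S ∪ ⋃ {vars(t) | (X = t) ∈ E with X ∈ S}`. -/
def downwards (E : Set (Tm F × Tm F)) (S : Set ℕ) : Set ℕ :=
  S ∪ {y | ∃ x t, (Tm.var x, t) ∈ E ∧ x ∈ S ∧ y ∈ Tm.vars t}

/-- `upwards(E, S) = S ∪ {X | (X = t) ∈ E and vars(t) ⊆ S}`. -/
def upwards (E : Set (Tm F × Tm F)) (S : Set ℕ) : Set ℕ :=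
  S ∪ {x | ∃ t, (Tm.var x, t) ∈ E ∧ Tm.vars t ⊆ S}

end Subst


/-! Glue `XΨ ↦ Xθρμ` (for `X ∈ U`) with `Y ↦ Yωμ` (for `Y ∈ V`): since `UΨ` is apart from `V`,
this unifies `AΨ` and `B`, hence factors as `μ₀ ∘ δ`, and it grounds `θ♭Ψ ∪ σ♭`. Because `μ₀`
is in solved form, its right-hand sides avoid `dom μ₀`, where `μ₀ ∘ δ` therefore acts as `δ`;
so the set of variables grounded by `μ₀ ∘ δ` is closed under `downwards` and `upwards` of `E₀`.
On `V` the glued substitution is `ω ∘ μ`. -/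

namespace Tm

variable {F : Type}

@[elab_as_elim]
theorem ind {P : Tm F → Prop} (var : ∀ x, P (var x))
    (app : ∀ f ts, (∀ t ∈ ts, P t) → P (app f ts)) : ∀ t, P t
  | .var x => var x
  | .app f ts => app f ts fun t _ => ind var app t
  termination_by t => sizeOf t
  decreasing_by
    have := List.sizeOf_lt_of_mem ‹t ∈ ts›
    simp only [Tm.app.sizeOf_spec]
    omega

@[simp]
theorem subst_var (x : ℕ) (θ : Subst F) : (var x).subst θ = θ x := by
  rw [subst]

theorem subst_app (f : F) (ts : List (Tm F)) (θ : Subst F) :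
    (app f ts).subst θ = app f (ts.map fun t => t.subst θ) := by
  rw [subst]
  simp

@[simp]
theorem mem_vars_var {x y : ℕ} : y ∈ (var x : Tm F).vars ↔ y = x := by
  rw [vars]
  rfl

theorem mem_vars_app {y : ℕ} {f : F} {ts : List (Tm F)} :
    y ∈ (app f ts).vars ↔ ∃ t ∈ ts, y ∈ t.vars := by
  rw [vars]
  simp

theorem subst_congr {θ σ : Subst F} {t : Tm F} (h : ∀ x ∈ t.vars, θ x = σ x) :
    t.subst θ = t.subst σ := by
  induction t using Tm.ind with
  | var x => simpa using h x
  | app f ts ih =>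
    simp only [subst_app, app.injEq, true_and]
    exact List.map_congr_left fun t ht =>
      ih t ht fun x hx => h x (mem_vars_app.mpr ⟨t, ht, hx⟩)

theorem subst_subst (θ σ : Subst F) (t : Tm F) :
    (t.subst θ).subst σ = t.subst (Subst.comp θ σ) := by
  induction t using Tm.ind with
  | var x => simp [Subst.comp]
  | app f ts ih =>
    simp only [subst_app, List.map_map, app.injEq, true_and]
    exact List.map_congr_left ih

theorem mem_vars_subst {θ : Subst F} {t : Tm F} {y : ℕ} :
    y ∈ (t.subst θ).vars ↔ ∃ x ∈ t.vars, y ∈ (θ x).vars := by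
  induction t using Tm.ind with
  | var x => simp
  | app f ts ih =>
    simp only [subst_app, mem_vars_app, List.mem_map]
    constructor
    · rintro ⟨_, ⟨t, ht, rfl⟩, hy⟩
      obtain ⟨x, hx, hyx⟩ := (ih t ht).mp hy
      exact ⟨x, ⟨t, ht, hx⟩, hyx⟩
    · rintro ⟨x, ⟨t, ht, hx⟩, hyx⟩
      exact ⟨t.subst θ, ⟨t, ht, rfl⟩, (ih t ht).mpr ⟨x, hx, hyx⟩⟩

theorem ground_subst_iff {θ : Subst F} {t : Tm F} :
    (t.subst θ).Ground ↔ ∀ x ∈ t.vars, (θ x).Ground := by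
  simp only [Ground, Set.eq_empty_iff_forall_notMem, mem_vars_subst]
  grind

theorem Ground.subst {t : Tm F} (ht : t.Ground) (θ : Subst F) : (t.subst θ).Ground :=
  ground_subst_iff.mpr fun x hx => absurd hx (ht ▸ Set.notMem_empty x)

end Tm

namespace Subst

variable {F : Type}

theorem comp_apply_of_notMem_dom {μ : Subst F} {x : ℕ} (hx : x ∉ dom μ) (δ : Subst F) :
    comp μ δ x = δ x := by
  have hμx : μ x = Tm.var x := not_not.mp hx
  simp [comp, hμx]

theorem varImage_finite (ρ : Subst F) {U : Set ℕ} (hU : U.Finite) : (varImage ρ U).Finite := by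
  have : varImage ρ U = ⋃ x ∈ U, {y | ρ x = Tm.var y} := by
    ext y
    simp [varImage]
  rw [this]
  refine hU.biUnion fun _ _ => Set.Subsingleton.finite ?_
  intro y hy z hz
  exact Tm.var.inj (hy.symm.trans hz)

theorem restrict_apply_of_mem {σ : Subst F} {V : Set ℕ} {x : ℕ} (hx : x ∈ V) :
    restrict σ V x = σ x :=
  if_pos hx

theorem isSubst_restrict (σ : Subst F) {V : Set ℕ} (hV : V.Finite) : IsSubst (restrict σ V) :=
  hV.subset fun _ hx => by_contra fun hxV => hx (if_neg hxV)

theorem subst_restrict {σ : Subst F} {V : Set ℕ} {t : Tm F} (ht : t.vars ⊆ V) :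
    t.subst (restrict σ V) = t.subst σ :=
  Tm.subst_congr fun _ hx => restrict_apply_of_mem (ht hx)

/-- `XΨ ↦ Xφ` for `X ∈ U`, and `y ↦ yψ` off `UΨ`. -/
noncomputable def glue (Ψ : Subst F) (U : Set ℕ) (φ ψ : Subst F) : Subst F := fun y =>
  if h : ∃ x ∈ U, Ψ x = Tm.var y then φ h.choose else ψ y

section glue

variable {Ψ φ ψ : Subst F} {U : Set ℕ}

theorem glue_apply_of_eq (hinj : Set.InjOn Ψ U) {x y : ℕ} (hx : x ∈ U) (hxy : Ψ x = Tm.var y) :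
    glue Ψ U φ ψ y = φ x := by
  have h : ∃ x ∈ U, Ψ x = Tm.var y := ⟨x, hx, hxy⟩
  rw [glue, dif_pos h, hinj h.choose_spec.1 hx (h.choose_spec.2.trans hxy.symm)]

theorem glue_apply_of_notMem {y : ℕ} (hy : y ∉ varImage Ψ U) : glue Ψ U φ ψ y = ψ y :=
  dif_neg hy

theorem isSubst_glue (hU : U.Finite) (hψ : IsSubst ψ) : IsSubst (glue Ψ U φ ψ) := by
  refine ((varImage_finite Ψ hU).union hψ).subset fun y hy => ?_
  by_contra hyU
  rw [Set.mem_union, not_or] at hyU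
  exact hy (by rw [glue_apply_of_notMem hyU.1]; simpa [dom] using hyU.2)

theorem subst_subst_glue (hvar : ∀ x, ∃ y, Ψ x = Tm.var y) (hinj : Set.InjOn Ψ U)
    {t : Tm F} (ht : t.vars ⊆ U) : (t.subst Ψ).subst (glue Ψ U φ ψ) = t.subst φ := by
  rw [Tm.subst_subst]
  refine Tm.subst_congr fun x hx => ?_
  obtain ⟨y, hy⟩ := hvar x
  simp only [comp, hy, Tm.subst_var]
  exact glue_apply_of_eq hinj (ht hx) hy

theorem subst_glue_of_disjoint {t : Tm F} (ht : Disjoint t.vars (varImage Ψ U)) :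
    t.subst (glue Ψ U φ ψ) = t.subst ψ :=
  Tm.subst_congr fun _ hx => glue_apply_of_notMem (Set.disjoint_left.mp ht hx)

end glue

def eqns (μ : Subst F) : Set (Tm F × Tm F) := {e | ∃ x ∈ dom μ, e = (Tm.var x, μ x)}

theorem var_mem_eqns_iff {μ : Subst F} {x : ℕ} {t : Tm F} :
    (Tm.var x, t) ∈ eqns μ ↔ x ∈ dom μ ∧ t = μ x := by
  simp [eqns, and_comm]

def groundVars (σ : Subst F) : Set ℕ := {x | (σ x).Ground}

def IsSolved (μ : Subst F) : Prop := ∀ x ∈ dom μ, ∀ y ∈ dom μ, y ∉ (μ x).vars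

theorem comp_apply_of_mem_vars {μ : Subst F} (hsolved : IsSolved μ) (δ : Subst F)
    {x y : ℕ} (hx : x ∈ dom μ) (hy : y ∈ (μ x).vars) :
    comp μ δ y = δ y :=
  comp_apply_of_notMem_dom (fun hyd => hsolved x hx y hyd hy) δ

theorem downwards_subset_groundVars {μ : Subst F} (hsolved : IsSolved μ) (δ : Subst F)
    {S : Set ℕ} (hS : S ⊆ groundVars (comp μ δ)) :
    downwards (eqns μ) S ⊆ groundVars (comp μ δ) := by
  rintro y (hy | ⟨x, t, hxt, hxS, hyt⟩)
  · exact hS hy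
  obtain ⟨hx, rfl⟩ := var_mem_eqns_iff.mp hxt
  show (comp μ δ y).Ground
  rw [comp_apply_of_mem_vars hsolved δ hx hyt]
  exact Tm.ground_subst_iff.mp (hS hxS) y hyt

theorem upwards_subset_groundVars {μ : Subst F} (hsolved : IsSolved μ) (δ : Subst F)
    {S : Set ℕ} (hS : S ⊆ groundVars (comp μ δ)) :
    upwards (eqns μ) S ⊆ groundVars (comp μ δ) := by
  rintro x (hx | ⟨t, hxt, htS⟩)
  · exact hS hx
  obtain ⟨hx, rfl⟩ := var_mem_eqns_iff.mp hxt
  refine Tm.ground_subst_iff.mpr fun y hy => ?_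
  rw [← comp_apply_of_mem_vars hsolved δ hx hy]
  exact hS (htS hy)

end Subst

open Subst in
theorem stmt11_general {F : Type} (U V : Set ℕ) (hU : U.Finite) (hV : V.Finite)
    (A B : Tm F) (hA : A.vars ⊆ U) (hB : B.vars ⊆ V)
    (θb σb : Set ℕ) (hθb : θb ⊆ U) (hσb : σb ⊆ V)
    (Ψ : Subst F) (hΨ : Subst.IsRenaming Ψ) (hΨdom : Subst.dom Ψ = U)
    (hΨV : Subst.varImage Ψ U ∩ V = ∅)
    (μ₀ : Subst F) (hμ₀ : Subst.IsMGU μ₀ (A.subst Ψ) B)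
    (E₀ : Set (Tm F × Tm F))
    (hE₀ : E₀ = {e | ∃ x ∈ Subst.dom μ₀, e = (Tm.var x, μ₀ x)})
    (hsolved : ∀ x ∈ Subst.dom μ₀, ∀ y ∈ Subst.dom μ₀, y ∉ (μ₀ x).vars)
    (θ ω : Subst F)
    (hθg : ∀ X ∈ θb, (θ X).Ground) (hωg : ∀ X ∈ σb, (ω X).Ground)
    (ρ : Subst F)
    (μ : Subst F) (hμ : Subst.IsMGU μ ((A.subst θ).subst ρ) (B.subst ω)) :
    ∀ Z ∈ V ∩ Subst.upwards E₀ (Subst.downwards E₀ (Subst.varImage Ψ θb ∪ σb)),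
      (Subst.comp ω μ Z).Ground := by
  obtain ⟨-, hΨvar, hΨinj⟩ := hΨ
  rw [hΨdom] at hΨinj
  have hVU : ∀ y ∈ V, y ∉ varImage Ψ U := fun y hyV hyU =>
    (Set.eq_empty_iff_forall_notMem.mp hΨV) y ⟨hyU, hyV⟩
  set τ := glue Ψ U (comp θ (comp ρ μ)) (restrict (comp ω μ) V)
  have hτU : ∀ X ∈ U, ∀ y, Ψ X = Tm.var y → τ y = comp θ (comp ρ μ) X :=
    fun _ hX _ hXy => glue_apply_of_eq hΨinj hX hXy
  have hτV : ∀ y ∈ V, τ y = comp ω μ y := fun y hy =>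
    (glue_apply_of_notMem (hVU y hy)).trans (restrict_apply_of_mem hy)
  have hτ : Unifier τ (A.subst Ψ) B := by
    refine ⟨isSubst_glue hU (isSubst_restrict _ hV), ?_⟩
    rw [subst_subst_glue hΨvar hΨinj hA, subst_glue_of_disjoint
      (Set.disjoint_left.mpr fun y hy => hVU y (hB hy)), subst_restrict hB,
      ← Tm.subst_subst, ← Tm.subst_subst, ← Tm.subst_subst, hμ.1.2]
  obtain ⟨δ, -, hτδ⟩ := hμ₀.2 τ hτ
  have hS₀ : varImage Ψ θb ∪ σb ⊆ groundVars (comp μ₀ δ) := by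
    intro y hy
    show (comp μ₀ δ y).Ground
    rw [← hτδ]
    rcases hy with ⟨X, hX, hXy⟩ | hy
    · rw [hτU X (hθb hX) y hXy]
      exact (hθg X hX).subst _
    · rw [hτV y (hσb hy)]
      exact (hωg y hy).subst μ
  rintro Z ⟨hZV, hZ⟩
  subst hE₀
  rw [← hτV Z hZV, hτδ]
  exact upwards_subset_groundVars hsolved δ (downwards_subset_groundVars hsolved δ hS₀) hZ

/-- safety of the abstract unification algorithm for groundness
analysis. -/
theorem stmt11 {F : Type} (U V : Set ℕ) (hU : U.Finite) (hV : V.Finite)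
    (A B : Tm F) (hA : A.vars ⊆ U) (hB : B.vars ⊆ V)
    (θb σb : Set ℕ) (hθb : θb ⊆ U) (hσb : σb ⊆ V)
    (Ψ : Subst F) (hΨ : Subst.IsRenaming Ψ) (hΨdom : Subst.dom Ψ = U)
    (hΨV : Subst.varImage Ψ U ∩ V = ∅)
    (μ₀ : Subst F) (hμ₀ : Subst.IsMGU μ₀ (A.subst Ψ) B)
    (hidem : Subst.comp μ₀ μ₀ = μ₀)
    (E₀ : Set (Tm F × Tm F))
    (hE₀ : E₀ = {e | ∃ x ∈ Subst.dom μ₀, e = (Tm.var x, μ₀ x)})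
    (hsolved : ∀ x ∈ Subst.dom μ₀, ∀ y ∈ Subst.dom μ₀, y ∉ (μ₀ x).vars)
    (θ ω : Subst F) (hθ : Subst.IsSubst θ) (hω : Subst.IsSubst ω)
    (hθg : ∀ X ∈ θb, (θ X).Ground) (hωg : ∀ X ∈ σb, (ω X).Ground)
    (ρ : Subst F) (hρ : Subst.IsRenaming ρ)
    (hsep : ((A.subst θ).subst ρ).vars ∩ (B.subst ω).vars = ∅)
    (μ : Subst F) (hμ : Subst.IsMGU μ ((A.subst θ).subst ρ) (B.subst ω)) :
    ∀ Z ∈ V ∩ Subst.upwards E₀ (Subst.downwards E₀ (Subst.varImage Ψ θb ∪ σb)),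
      (Subst.comp ω μ Z).Ground :=
  stmt11_general U V hU hV A B hA hB θb σb hθb hσb Ψ hΨ hΨdom hΨV μ₀ hμ₀ E₀ hE₀ hsolved θ ω hθg hωg
    ρ μ hμ
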